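/- Let G and H be simple graphs and let p be a function assigning to each vertex of G a (possibly empty) set of vertices of H, such that whenever u and v are adjacent in G, every x ∈ p(u) and every y ∈ p(v) satisfy x = y or x and y are adjacent in H. Suppose there is a vertex w of G such that for every vertex v of G, p(v) = ∅ if and only if v = w. Let a and b be vertices of G and let m be a natural number such that for every x ∈ p(a) and y ∈ p(b), every walk in H from x to y has length at least m. Then every walk in G from a to b whose length is strictly less than m contains w in its support. -/

import Mathlib

namespace SimpleGraph.Walk

variable {V W : Type*} {G : SimpleGraph V} {H : SimpleGraph W} {p : V → Set W}

/-- Each step of `q` moves the projection by at most one edge of `H`. -/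
theorem exists_walk_length_le_of_forall_nonempty
    (hp : ∀ u v : V, G.Adj u v → ∀ x ∈ p u, ∀ y ∈ p v, x = y ∨ H.Adj x y) :
    ∀ {a b : V} (q : G.Walk a b), (∀ v ∈ q.support, (p v).Nonempty) →
      ∀ x ∈ p a, ∃ y ∈ p b, ∃ r : H.Walk x y, r.length ≤ q.length
  | _, _, nil, _, x, hx => ⟨x, hx, nil, le_rfl⟩
  | _, _, cons (v := c) hadj q, hne, x, hx => by
    obtain ⟨x', hx'⟩ := hne c (by simp)
    obtain ⟨y, hy, r, hr⟩ :=
      exists_walk_length_le_of_forall_nonempty hp q (fun v hv ↦ hne v (by simp [hv])) x' hx'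
    rcases hp _ c hadj x hx x' hx' with rfl | hxx'
    · exact ⟨y, hy, r, by rw [length_cons]; omega⟩
    · exact ⟨y, hy, cons hxx' r, by simpa using hr⟩

end SimpleGraph.Walk

/-- If the only vertex of `G` with empty projection is `w`, and all projection
points of `a` and `b` are at walk-distance at least `m` in `H`, then every
walk in `G` from `a` to `b` of length `< m` contains `w` in its support. -/
theorem stmt_1 {V W : Type*} (G : SimpleGraph V) (H : SimpleGraph W)
    (p : V → Set W)
    (hp : ∀ u v : V, G.Adj u v → ∀ x ∈ p u, ∀ y ∈ p v, x = y ∨ H.Adj x y)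
    (w : V) (hw : ∀ v : V, p v = ∅ ↔ v = w)
    (a b : V) (m : ℕ)
    (hm : ∀ x ∈ p a, ∀ y ∈ p b, ∀ q : H.Walk x y, m ≤ q.length) :
    ∀ q : G.Walk a b, q.length < m → w ∈ q.support := by
  intro q hq
  by_contra hw_notMem
  have hne : ∀ v ∈ q.support, (p v).Nonempty := fun v hv ↦
    Set.nonempty_iff_ne_empty.mpr fun h ↦ hw_notMem ((hw v).mp h ▸ hv)
  obtain ⟨x, hx⟩ := hne a q.start_mem_support
  obtain ⟨y, hy, r, hr⟩ := q.exists_walk_length_le_of_forall_nonempty hp hne x hx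
  exact (hm x hx y hy r).not_gt (hr.trans_lt hq)
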